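/- arXiv:0804.2511 — 9 statements merged into one kernel-verified Lean document; each statement's English description precedes it below -/
import Mathlib

section
/- The combinatorial R map given by the piecewise linear formula x̃_i = x_i + Q_i(x,y) - Q_{i-1}(x,y), ỹ_i = y_i + Q_{i-1}(x,y) - Q_i(x,y) is an involution in the following sense: applying the formula to (x̃, ỹ) ∈ B_l × B_k recovers (y, x), i.e., R ∘ R = id as a map B_k ⊗ B_l → B_k ⊗ B_l (after swapping factors twice). -/
/-- The combinatorial `R` via the piecewise-linear formula:
`Rm x y = (ỹ, x̃)` where `x̃ᵢ = xᵢ + Qᵢ - Q_{i-1}`, `ỹᵢ = yᵢ + Q_{i-1} - Qᵢ`,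
`Q₀(x,y) = min(x₁,y₂)`, `Q₁(x,y) = min(x₂,y₁)`. -/
def Rm (x y : ℤ × ℤ) : (ℤ × ℤ) × (ℤ × ℤ) :=
  ((y.1 + min x.1 y.2 - min x.2 y.1, y.2 + min x.2 y.1 - min x.1 y.2),
   (x.1 + min x.2 y.1 - min x.1 y.2, x.2 + min x.1 y.2 - min x.2 y.1))

/-!
`R` transports the amount `d = Q₀(x,y) - Q₁(x,y)` between the two factors:
`ỹ = y + (d, -d)` and `x̃ = x - (d, -d)`. Since `min` commutes with translations,
`Q₀(ỹ,x̃) = Q₁(x,y) + d` and `Q₁(ỹ,x̃) = Q₀(x,y) - d`, so the image pair has the same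
`d`, and applying `R` again transports it back.
-/

def rShift (x y : ℤ × ℤ) : ℤ := min x.1 y.2 - min x.2 y.1

theorem Rm_eq (x y : ℤ × ℤ) :
    Rm x y = ((y.1 + rShift x y, y.2 - rShift x y), (x.1 - rShift x y, x.2 + rShift x y)) := by
  simp only [Rm, rShift, Prod.mk.injEq]
  refine ⟨⟨?_, ?_⟩, ?_, ?_⟩ <;> ring

theorem rShift_Rm (x y : ℤ × ℤ) : rShift (Rm x y).1 (Rm x y).2 = rShift x y := by
  rw [Rm_eq]
  set d := rShift x y with hd
  simp only [rShift] at hd ⊢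
  rw [min_add_add_right, min_sub_sub_right, min_comm y.1, min_comm y.2]
  linarith

theorem combinatorial_R_involution_general
    (x y : ℤ × ℤ) :
    Rm (Rm x y).1 (Rm x y).2 = (x, y) := by
  rw [Rm_eq (Rm x y).1, rShift_Rm, Rm_eq x y]
  simp only [sub_add_cancel, add_sub_cancel_right]

/-- the combinatorial R given by the piecewise linear formula is an
involution: applying the formula to the image pair recovers `(x, y)`,
i.e. `R ∘ R = id` (after swapping factors twice). -/
theorem combinatorial_R_involution
    (x y : ℤ × ℤ)
    (hx1 : 0 ≤ x.1) (hx2 : 0 ≤ x.2) (hy1 : 0 ≤ y.1) (hy2 : 0 ≤ y.2) :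
    Rm (Rm x y).1 (Rm x y).2 = (x, y) :=
  combinatorial_R_involution_general x y
end

section
/- Let b = b_1 ⊗ ⋯ ⊗ b_L with b_j ∈ B_{λ_j}. Define u_l^{(0)} = u_l = (l,0) ∈ B_l and recursively u_l^{(j)} to be the element carried through by the combinatorial R: u_l^{(j-1)} ⊗ b_j ≅ b_j' ⊗ u_l^{(j)}. Set E_{l,j} = H(u_l^{(j-1)} ⊗ b_j) and E_{0,j} = 0. Then for all l ≥ 1 and all 1 ≤ j ≤ L, E_{l,j} - E_{l-1,j} ∈ {0, 1}. -/
/-- `Q₀(x,y) = min(x₁,y₂)`. -/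
def RQ0 (x y : ℤ × ℤ) : ℤ := min x.1 y.2

/-- `Q₁(x,y) = min(x₂,y₁)`. -/
def RQ1 (x y : ℤ × ℤ) : ℤ := min x.2 y.1

/-- The carrier output of the combinatorial R: `x ⊗ y ≅ ỹ ⊗ x̃`,
`x̃ᵢ = xᵢ + Qᵢ - Q_{i-1}`. -/
def Rcar (x y : ℤ × ℤ) : ℤ × ℤ :=
  (x.1 + RQ1 x y - RQ0 x y, x.2 + RQ0 x y - RQ1 x y)

/-- The passed-down output of the combinatorial R: `ỹᵢ = yᵢ + Q_{i-1} - Qᵢ`. -/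
def Rout (x y : ℤ × ℤ) : ℤ × ℤ :=
  (y.1 + RQ0 x y - RQ1 x y, y.2 + RQ1 x y - RQ0 x y)

/-- The energy function `H(x ⊗ y) = Q₀(x,y)`. -/
def Hfun (x y : ℤ × ℤ) : ℤ := RQ0 x y

/-- The carrier `u_l^{(j)}` obtained by transporting the highest element
`u_l = (l,0)` through the first `j` tensor factors `b 0, …, b (j-1)` of the path. -/
def carrier (b : ℕ → ℤ × ℤ) (l : ℕ) : ℕ → ℤ × ℤ
  | 0 => ((l : ℤ), 0)
  | j + 1 => Rcar (carrier b l j) (b j)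

/-- The local energy `E_{l,j+1} = H(u_l^{(j)} ⊗ b_{j+1})` (0-indexed in `j`). -/
def Eloc (b : ℕ → ℤ × ℤ) (l j : ℕ) : ℤ := Hfun (carrier b l j) (b j)

/-- The conserved quantity `E_l = ∑_{j=1}^L E_{l,j}`. -/
def Esum (b : ℕ → ℤ × ℤ) (L l : ℕ) : ℤ := ∑ j ∈ Finset.range L, Eloc b l j

/-- The `j`-th factor (0-indexed) of the time evolution `T_l(b)`. -/
def Tout (b : ℕ → ℤ × ℤ) (l j : ℕ) : ℤ × ℤ := Rout (carrier b l j) (b j)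

/-!
Raising `l` by one adds a single unit to one coordinate of every carrier `u_l^{(j)}`. The
combinatorial R preserves this: `Q₀` and `Q₁` are `1`-Lipschitz in the carrier and a unit step
moves only one of them, so the unit either stays in its coordinate or is transferred to the other.
Since `H(x ⊗ y) = min(x₁, y₂)` is monotone and `1`-Lipschitz in `x`, the energy grows by `0` or `1`.
-/

def UnitStep (x y : ℤ × ℤ) : Prop := x = y + (1, 0) ∨ x = y + (0, 1)

theorem unitStep_Rcar {x y : ℤ × ℤ} (h : UnitStep x y) (z : ℤ × ℤ) :
    UnitStep (Rcar x z) (Rcar y z) := by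
  unfold UnitStep Rcar RQ0 RQ1
  rcases h with rfl | rfl <;>
    simp only [Prod.fst_add, Prod.snd_add, Prod.mk_add_mk, Prod.mk.injEq] <;> omega

theorem unitStep_carrier_succ (b : ℕ → ℤ × ℤ) (l j : ℕ) :
    UnitStep (carrier b (l + 1) j) (carrier b l j) := by
  induction j with
  | zero => exact Or.inl (by ext <;> simp [carrier])
  | succ j ih => exact unitStep_Rcar ih (b j)

theorem Hfun_sub_eq_zero_or_one {x y : ℤ × ℤ} (h : UnitStep x y) (z : ℤ × ℤ) :
    Hfun x z - Hfun y z = 0 ∨ Hfun x z - Hfun y z = 1 := by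
  unfold Hfun RQ0
  rcases h with rfl | rfl <;> simp only [Prod.fst_add] <;> omega

theorem local_energy_difference_zero_or_one_general
    (L : ℕ) (b : ℕ → ℤ × ℤ) :
    ∀ l : ℕ, 1 ≤ l → ∀ j < L,
      Eloc b l j - Eloc b (l - 1) j = 0 ∨ Eloc b l j - Eloc b (l - 1) j = 1 := by
  intro l hl j _
  obtain ⟨k, rfl⟩ := Nat.exists_eq_add_of_le' hl
  exact Hfun_sub_eq_zero_or_one (unitStep_carrier_succ b k j) (b j)

/-- for a path `b = b₁ ⊗ ⋯ ⊗ b_L` with `b_j ∈ B_{λ_j}`,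
the local energies satisfy `E_{l,j} - E_{l-1,j} ∈ {0,1}` for all `l ≥ 1`
and all `1 ≤ j ≤ L`. -/
theorem local_energy_difference_zero_or_one
    (L : ℕ) (b : ℕ → ℤ × ℤ)
    (hb : ∀ j < L, 0 ≤ (b j).1 ∧ 0 ≤ (b j).2) :
    ∀ l : ℕ, 1 ≤ l → ∀ j < L,
      Eloc b l j - Eloc b (l - 1) j = 0 ∨ Eloc b l j - Eloc b (l - 1) j = 1 :=
  local_energy_difference_zero_or_one_general L b
end

section
/- With E_{l,j} the local energies of a path b = b_1 ⊗ ⋯ ⊗ b_L as defined via successive application of the combinatorial R with carrier u_l, the sequence E_l := Σ_{j=1}^L E_{l,j} is weakly increasing in l and stabilizes: there exists l_0 such that E_l = E_{l_0} for all l ≥ l_0 (in fact one may take l_0 = Σ_j λ_j). -/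
/-!
Raising the carrier from `u_l` to `u_{l+1}` adds one box to exactly one coordinate of every
subsequent carrier `u_l^{(j)}`, so every local energy `min((u_l^{(j)})₁, (b_{j+1})₂)` weakly
increases with `l`. Passing through `b_{j+1}` lowers the first coordinate of a nonnegative carrier
by at most `(b_{j+1})₂`, so once `l ≥ ∑_j (b_j)₂` each local energy equals `(b_{j+1})₂`, whatever `l`.
-/

open Finset

section Monotonicity

variable (b : ℕ → ℤ × ℤ)

lemma Rcar_add_unit (x y : ℤ × ℤ) :
    (Rcar (x + (1, 0)) y = Rcar x y + (1, 0) ∨ Rcar (x + (1, 0)) y = Rcar x y + (0, 1)) ∧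
    (Rcar (x + (0, 1)) y = Rcar x y + (1, 0) ∨ Rcar (x + (0, 1)) y = Rcar x y + (0, 1)) := by
  simp only [Rcar, RQ0, RQ1, Prod.fst_add, Prod.snd_add, Prod.mk_add_mk, Prod.mk.injEq]
  omega

lemma carrier_succ_eq_add_unit (l j : ℕ) :
    carrier b (l + 1) j = carrier b l j + (1, 0) ∨
      carrier b (l + 1) j = carrier b l j + (0, 1) := by
  induction j with
  | zero => left; simp [carrier]
  | succ j ih =>
    simp only [carrier]
    rcases ih with h | h <;> rw [h]
    exacts [(Rcar_add_unit _ _).1, (Rcar_add_unit _ _).2]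

lemma Eloc_le_Eloc_succ (l j : ℕ) : Eloc b l j ≤ Eloc b (l + 1) j := by
  rcases carrier_succ_eq_add_unit b l j with h | h <;>
    simp only [Eloc, Hfun, RQ0, h, Prod.fst_add] <;> omega

lemma monotone_Esum (L : ℕ) : Monotone (Esum b L) :=
  monotone_nat_of_le_succ fun l => sum_le_sum fun j _ => Eloc_le_Eloc_succ b l j

end Monotonicity

section Stabilization

variable {b : ℕ → ℤ × ℤ}

lemma Rcar_nonneg {x y : ℤ × ℤ} (hx : 0 ≤ x) (hy : 0 ≤ y) : 0 ≤ Rcar x y := by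
  rw [Prod.le_def] at hx hy ⊢
  simp only [Rcar, RQ0, RQ1, Prod.fst_zero, Prod.snd_zero] at hx hy ⊢
  omega

lemma fst_sub_snd_le_Rcar_fst {x y : ℤ × ℤ} (hx : 0 ≤ x.2) (hy : 0 ≤ y.1) :
    x.1 - y.2 ≤ (Rcar x y).1 := by
  simp only [Rcar, RQ0, RQ1]
  omega

lemma carrier_nonneg {l j : ℕ} (hb : ∀ k < j, 0 ≤ b k) : 0 ≤ carrier b l j := by
  induction j with
  | zero => exact Prod.le_def.2 ⟨by simp [carrier], le_rfl⟩
  | succ j ih => exact Rcar_nonneg (ih fun k hk => hb k (by omega)) (hb j j.lt_succ_self)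

lemma sub_sum_snd_le_carrier_fst {l j : ℕ} (hb : ∀ k < j, 0 ≤ b k) :
    (l : ℤ) - ∑ k ∈ range j, (b k).2 ≤ (carrier b l j).1 := by
  induction j with
  | zero => simp [carrier]
  | succ j ih =>
    have hb' : ∀ k < j, 0 ≤ b k := fun k hk => hb k (by omega)
    have hstep := fst_sub_snd_le_Rcar_fst (carrier_nonneg (l := l) hb').2 (hb j j.lt_succ_self).1
    rw [sum_range_succ]
    simp only [carrier]
    linarith [ih hb']

lemma Eloc_eq_snd {l j : ℕ} (hb : ∀ k < j, 0 ≤ b k)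
    (hl : ∑ k ∈ range (j + 1), (b k).2 ≤ l) : Eloc b l j = (b j).2 := by
  have := sub_sum_snd_le_carrier_fst (l := l) hb
  rw [sum_range_succ] at hl
  simp only [Eloc, Hfun, RQ0]
  omega

lemma Esum_eq_sum_snd {L l : ℕ} (hb : ∀ j < L, 0 ≤ b j)
    (hl : ∑ j ∈ range L, (b j).2 ≤ l) : Esum b L l = ∑ j ∈ range L, (b j).2 := by
  refine sum_congr rfl fun j hj => Eloc_eq_snd (fun k hk => hb k ?_) (hl.trans' ?_)
  · rw [mem_range] at hj; omega
  · exact sum_le_sum_of_subset_of_nonneg (range_subset_range.2 (mem_range.1 hj))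
      fun k hk _ => (hb k (mem_range.1 hk)).2

end Stabilization

/-- the sequence `E_l = ∑_{j=1}^L E_{l,j}` is weakly increasing in `l`
and stabilizes: `E_l = E_{l₀}` for all `l ≥ l₀`, with `l₀ = ∑_j λ_j`. -/
theorem conserved_quantities_increasing_and_stabilize
    (L : ℕ) (b : ℕ → ℤ × ℤ)
    (hb : ∀ j < L, 0 ≤ (b j).1 ∧ 0 ≤ (b j).2) :
    (∀ l : ℕ, Esum b L l ≤ Esum b L (l + 1)) ∧
    (∀ l : ℕ, (∑ j ∈ Finset.range L, ((b j).1 + (b j).2)).toNat ≤ l →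
      Esum b L l = Esum b L (∑ j ∈ Finset.range L, ((b j).1 + (b j).2)).toNat) := by
  refine ⟨fun l => monotone_Esum b L l.le_succ, fun l hl => ?_⟩
  set l₀ := (∑ j ∈ range L, ((b j).1 + (b j).2)).toNat
  have hsnd_le : ∑ j ∈ range L, (b j).2 ≤ l₀ := by
    refine le_trans ?_ (Int.self_le_toNat _)
    exact sum_le_sum fun j hj => le_add_of_nonneg_left (hb j (mem_range.1 hj)).1
  rw [Esum_eq_sum_snd hb (hsnd_le.trans (by exact_mod_cast hl)), Esum_eq_sum_snd hb hsnd_le]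
end

section
/- Let μ = (μ_1, ..., μ_N) be positive integers with distinct values k_1 < ⋯ < k_s, multiplicities m_k, and vacancy numbers p_k = L - 2Σ_i min(k, μ_i), with p_k > 0 for all k < k_s and p_{k_s} ≥ 0. For each k ∈ {k_1,...,k_s}, let J̄_k be the set of weakly increasing integer sequences (J_i^{(k)})_{i∈Z} satisfying the quasi-periodicity J_{i+m_k}^{(k)} = J_i^{(k)} + p_k. Then for any element J̄ ∈ J̄_{k_1} × ⋯ × J̄_{k_s}, there exist an integer d and riggings J with 0 ≤ J_1^{(k)} ≤ ⋯ ≤ J_{m_k}^{(k)} ≤ p_k for each k, such that J̄ is equivalent (under the abelian group generated by the slides σ_l, which act by (J_i^{(k)}) ↦ (J_{i+δ_{l,k}}^{(k)} + 2 min(l,k))) to ι(J) + d, where ι(J) is the quasi-periodic extension of J. -/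
/-!
Write `S_a(n) = ∑_j 2 n_j min(k_j, k_a)` for the offset added by the slide `∏_j σ_{k_j}^{n_j}`
to the `a`-th sequence. Since `k` is increasing, the smallest row `k₀` enters `S_a` as
`2 n₀ k₀` for `a ≠ 0` and `S₀(n) = 2 k₀ ∑_j n_j`. Hence, after solving the problem for the
remaining rows with some `(d, n')`, the shift `d ↦ d + 2 n₀ k₀` leaves all other conditions
intact while the value `d - S₀` that `J̄₀` has to bracket does not depend on `n₀`; a slide
exponent `n₀` bracketing it exists because `p₀ > 0` makes `J̄₀` unbounded in both directions.
The largest row needs no slide: `n = 0` and `d = J̄ 0` work for it.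
-/

open Finset

theorem Monotone.exists_le_lt_add_one {f : ℤ → ℤ} (hf : Monotone f)
    (hbot : ∀ v, ∃ i, f i ≤ v) (htop : ∀ v, ∃ i, v < f i) (v : ℤ) :
    ∃ u, f u ≤ v ∧ v < f (u + 1) := by
  obtain ⟨j, hj⟩ := htop v
  have hbdd : ∀ z, f z ≤ v → z ≤ j := fun z hz =>
    le_of_not_gt fun hjz => (hj.trans_le (hf hjz.le)).not_ge hz
  obtain ⟨u, hu, hmax⟩ := Int.exists_greatest_of_bdd ⟨j, hbdd⟩ (hbot v)
  exact ⟨u, hu, lt_of_not_ge fun h => (hmax (u + 1) h).not_gt (lt_add_one u)⟩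

theorem exists_le_lt_add_one_of_map_add_const {f : ℤ → ℤ} {m p : ℤ} (hf : Monotone f)
    (hqp : ∀ i, f (i + m) = f i + p) (hp : 0 < p) (v : ℤ) :
    ∃ u, f u ≤ v ∧ v < f (u + 1) := by
  have hmul (c : ℤ) : f (c * m) = f 0 + c * p := by
    simpa using AddConstMapClass.map_zsmul_const (⟨f, hqp⟩ : AddConstMap ℤ ℤ m p) c
  refine hf.exists_le_lt_add_one (fun v => ⟨-(|v| + |f 0|) * m, ?_⟩)
    (fun v => ⟨(|v| + |f 0| + 1) * m, ?_⟩) v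
  · rw [hmul]
    nlinarith [abs_nonneg v, abs_nonneg (f 0), neg_abs_le v, le_abs_self (f 0)]
  · rw [hmul]
    nlinarith [abs_nonneg v, abs_nonneg (f 0), le_abs_self v, neg_abs_le (f 0)]

/-- The amount added to the `a`-th sequence by the slide `σ_{k_1}^{n_1} ⋯ σ_{k_s}^{n_s}`. -/
def slideOffset {s : ℕ} (k : Fin s → ℕ) (n : Fin s → ℤ) (a : Fin s) : ℤ :=
  ∑ j, 2 * n j * min (k j : ℤ) (k a : ℤ)

section slideOffset

variable {s : ℕ} {k : Fin (s + 1) → ℕ}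

theorem slideOffset_cons_zero (hk : Monotone k) (u : ℤ) (n : Fin s → ℤ) :
    slideOffset k (Fin.cons u n) 0 = 2 * k 0 * (u + ∑ j, n j) := by
  have hmin (j : Fin (s + 1)) : min (k j : ℤ) (k 0) = k 0 :=
    min_eq_right (by exact_mod_cast hk (Fin.zero_le j))
  simp only [slideOffset, hmin, Fin.sum_univ_succ, Fin.cons_zero, Fin.cons_succ, ← sum_mul,
    ← mul_sum]
  ring

theorem slideOffset_cons_succ (hk : Monotone k) (u : ℤ) (n : Fin s → ℤ) (b : Fin s) :
    slideOffset k (Fin.cons u n) b.succ = 2 * u * k 0 + slideOffset (Fin.tail k) n b := by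
  have hmin : min (k 0 : ℤ) (k b.succ) = k 0 :=
    min_eq_left (by exact_mod_cast hk (Fin.zero_le b.succ))
  simp only [slideOffset, Fin.sum_univ_succ, Fin.cons_zero, Fin.cons_succ, hmin, Fin.tail]

end slideOffset

theorem exists_slideOffset_bracket {s : ℕ} (k : Fin (s + 1) → ℕ) (hk : Monotone k)
    (f : Fin (s + 1) → ℤ → ℤ) (hlast : f (Fin.last s) 0 ≤ f (Fin.last s) 1)
    (hbracket : ∀ (a : Fin s) (v : ℤ), ∃ u, f a.castSucc u ≤ v ∧ v ≤ f a.castSucc (u + 1)) :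
    ∃ (d : ℤ) (n : Fin (s + 1) → ℤ), ∀ a,
      f a (n a) ≤ d - slideOffset k n a ∧ d - slideOffset k n a ≤ f a (n a + 1) := by
  induction s with
  | zero =>
    refine ⟨f (Fin.last 0) 0, 0, fun a => ?_⟩
    obtain rfl : a = Fin.last 0 := Fin.fin_one_eq_zero a
    simpa [slideOffset] using hlast
  | succ s ih =>
    obtain ⟨d, n, hn⟩ := ih (Fin.tail k) (hk.comp (Fin.strictMono_succ).monotone) (Fin.tail f)
      hlast fun a => by simpa only [Fin.tail, ← Fin.succ_castSucc] using hbracket a.succ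
    obtain ⟨u, hu⟩ := hbracket 0 (d - 2 * k 0 * ∑ j, n j)
    refine ⟨d + 2 * u * k 0, Fin.cons u n, Fin.cases ?_ fun b => ?_⟩
    · rw [slideOffset_cons_zero hk, Fin.cons_zero,
        show d + 2 * u * k 0 - 2 * k 0 * (u + ∑ j, n j) = d - 2 * k 0 * ∑ j, n j by ring]
      exact hu
    · rw [slideOffset_cons_succ hk, Fin.cons_succ, add_comm (2 * u * (k 0 : ℤ)),
        add_sub_add_right_eq_sub]
      exact hn b

theorem extended_rigging_standard_form_general
    (s : ℕ)
    (k m : Fin s → ℕ)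
    (hk : StrictMono k)
    (p : Fin s → ℤ)
    (hppos : ∀ a : Fin s, (a : ℕ) + 1 < s → 0 < p a)
    (Jbar : Fin s → ℤ → ℤ)
    (hmono : ∀ a, Monotone (Jbar a))
    (hqp : ∀ a (i : ℤ), Jbar a (i + (m a : ℤ)) = Jbar a i + p a) :
    ∃ (d : ℤ) (n : Fin s → ℤ),
      ∀ a : Fin s,
        0 ≤ Jbar a (1 + n a) + (∑ j, 2 * n j * min (k j : ℤ) (k a : ℤ)) - d ∧
        Jbar a ((m a : ℤ) + n a) + (∑ j, 2 * n j * min (k j : ℤ) (k a : ℤ)) - d ≤ p a := by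
  rcases s with _ | s
  · exact ⟨0, 0, fun a => a.elim0⟩
  obtain ⟨d, n, hn⟩ := exists_slideOffset_bracket k hk.monotone Jbar (hmono _ zero_le_one)
    fun a v => (exists_le_lt_add_one_of_map_add_const (hmono _) (hqp _)
      (hppos _ (by simp)) v).imp fun _ hu => ⟨hu.1, hu.2.le⟩
  refine ⟨d, n, fun a => ?_⟩
  obtain ⟨hlo, hhi⟩ := hn a
  rw [slideOffset] at hlo hhi
  rw [add_comm 1, add_comm (m a : ℤ), hqp]
  exact ⟨by linarith, by linarith⟩

/-- standard form of extended riggings, Prop. 3.9 of [KTT].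
Data: distinct row lengths `k₁ < ⋯ < k_s` with multiplicities `m_{k_a} ≥ 1` and
vacancy numbers `p a = L - 2 ∑_b m_b · min(k_a, k_b)`, positive except possibly
the last one, which is nonnegative.  An extended rigging is a tuple
`J̄ : Fin s → ℤ → ℤ` of weakly increasing biinfinite sequences with
quasi-periodicity `J̄ a (i + m a) = J̄ a i + p a`.  A slide
`σ_{k₁}^{n₁} ⋯ σ_{k_s}^{n_s}` acts on the `a`-th component by shifting the index
by `n a` and adding `∑_j 2 n_j min(k_j, k_a)`.  Claim: every extended rigging is
equivalent under slides to `ι(J) + d` for some `d ∈ ℤ` and some rigging `J` with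
`0 ≤ J₁^{(k)} ≤ ⋯ ≤ J_{m_k}^{(k)} ≤ p_k`; since monotonicity and
quasi-periodicity are preserved by slides, this amounts to the slid sequence
satisfying `0 ≤ K a 1 - d` and `K a (m a) - d ≤ p a` for every `a`. -/
theorem extended_rigging_standard_form
    (s L : ℕ) (hs : 0 < s)
    (k m : Fin s → ℕ)
    (hk : StrictMono k)
    (hkpos : ∀ a, 0 < k a)
    (hm : ∀ a, 0 < m a)
    (p : Fin s → ℤ)
    (hp : ∀ a, p a = (L : ℤ) - 2 * ∑ b, (m b : ℤ) * min (k a : ℤ) (k b : ℤ))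
    (hppos : ∀ a : Fin s, (a : ℕ) + 1 < s → 0 < p a)
    (hplast : ∀ a : Fin s, 0 ≤ p a)
    (Jbar : Fin s → ℤ → ℤ)
    (hmono : ∀ a, Monotone (Jbar a))
    (hqp : ∀ a (i : ℤ), Jbar a (i + (m a : ℤ)) = Jbar a i + p a) :
    ∃ (d : ℤ) (n : Fin s → ℤ),
      ∀ a : Fin s,
        0 ≤ Jbar a (1 + n a) + (∑ j, 2 * n j * min (k j : ℤ) (k a : ℤ)) - d ∧
        Jbar a ((m a : ℤ) + n a) + (∑ j, 2 * n j * min (k j : ℤ) (k a : ℤ)) - d ≤ p a :=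
  extended_rigging_standard_form_general s k m hk p hppos Jbar hmono hqp
end

section
/- The matrix A with entries A_{i,j} = δ_{i,j} p_{μ_i} + 2 min(μ_i, μ_j), where μ_1 < μ_2 < ⋯ < μ_g are positive integers and p_{μ_i} = L - 2 Σ_{j=1}^g min(μ_i, μ_j) with p_{μ_i} > 0 for all i, is symmetric and positive definite. -/
open Matrix

/-- `min (μ i) (μ j)` counts the `k < N` with `k < μ i` and `k < μ j`, so this is the Gram matrix
of the indicator vectors of `{k | k < μ i}`. -/
theorem Matrix.posSemidef_min_natCast {ι : Type*} [Fintype ι] (μ : ι → ℕ) :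
    (Matrix.of fun i j => min (μ i : ℝ) (μ j)).PosSemidef := by
  set N := Finset.univ.sup μ
  let B : Matrix ι (Fin N) ℝ := Matrix.of fun i k => if (k : ℕ) < μ i then 1 else 0
  have hB : B * Bᴴ = Matrix.of fun i j => min (μ i : ℝ) (μ j) := by
    ext i j
    have hle : min (μ i) (μ j) ≤ N := (min_le_left _ _).trans (Finset.le_sup (Finset.mem_univ i))
    simp only [B, mul_apply, conjTranspose_apply, of_apply, star_trivial, ite_zero_mul_ite_zero,
      mul_one, ← lt_min_iff, Finset.sum_boole, Fin.card_filter_val_lt, min_eq_right hle, Nat.cast_min]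
  exact hB ▸ posSemidef_self_mul_conjTranspose B

theorem string_center_matrix_posdef_general
    (g L : ℕ) (μ : Fin g → ℕ)
    (hp : ∀ i : Fin g, 0 < (L : ℝ) - 2 * ∑ j, min (μ i : ℝ) (μ j : ℝ)) :
    (Matrix.of fun i j : Fin g =>
        (if i = j then (L : ℝ) - 2 * ∑ t, min (μ i : ℝ) (μ t : ℝ) else 0)
          + 2 * min (μ i : ℝ) (μ j : ℝ)).IsSymm ∧
    (Matrix.of fun i j : Fin g =>
        (if i = j then (L : ℝ) - 2 * ∑ t, min (μ i : ℝ) (μ t : ℝ) else 0)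
          + 2 * min (μ i : ℝ) (μ j : ℝ)).PosDef := by
  set p : Fin g → ℝ := fun i => (L : ℝ) - 2 * ∑ t, min (μ i : ℝ) (μ t : ℝ)
  have hA : (Matrix.of fun i j : Fin g => (if i = j then p i else 0) + 2 * min (μ i : ℝ) (μ j))
      = diagonal p + (2 : ℝ) • Matrix.of fun i j => min (μ i : ℝ) (μ j) := by
    ext i j
    simp [diagonal_apply]
  have hpos : (diagonal p + (2 : ℝ) • Matrix.of fun i j => min (μ i : ℝ) (μ j)).PosDef :=
    (PosDef.diagonal hp).add_posSemidef ((posSemidef_min_natCast μ).smul zero_le_two)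
  rw [hA]
  exact ⟨isHermitian_iff_isSymm.mp hpos.isHermitian, hpos⟩

/-- the matrix `A_{ij} = δ_{ij} p_{μ_i} + 2 min(μ_i, μ_j)` of the
string center equation, for distinct soliton lengths `μ₁ < ⋯ < μ_g > 0` and
positive vacancy numbers `p_{μ_i} = L - 2 ∑_j min(μ_i, μ_j)`, is symmetric and
positive definite. -/
theorem string_center_matrix_posdef
    (g L : ℕ) (μ : Fin g → ℕ)
    (hμ : StrictMono μ) (hμpos : ∀ i, 0 < μ i)
    (hp : ∀ i : Fin g, 0 < (L : ℝ) - 2 * ∑ j, min (μ i : ℝ) (μ j : ℝ)) :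
    (Matrix.of fun i j : Fin g =>
        (if i = j then (L : ℝ) - 2 * ∑ t, min (μ i : ℝ) (μ t : ℝ) else 0)
          + 2 * min (μ i : ℝ) (μ j : ℝ)).IsSymm ∧
    (Matrix.of fun i j : Fin g =>
        (if i = j then (L : ℝ) - 2 * ∑ t, min (μ i : ℝ) (μ t : ℝ) else 0)
          + 2 * min (μ i : ℝ) (μ j : ℝ)).PosDef :=
  string_center_matrix_posdef_general g L μ hp
end

section
/- For the sl_2 combinatorial R computed by the piecewise-linear formula, the Yang–Baxter relation holds on B_k ⊗ B_l ⊗ B_m: (R ⊗ 1)(1 ⊗ R)(R ⊗ 1) = (1 ⊗ R)(R ⊗ 1)(1 ⊗ R) as maps B_k ⊗ B_l ⊗ B_m → B_m ⊗ B_l ⊗ B_k. -/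
/-- `R ⊗ 1` acting on the first two factors of a triple. -/
def R12 (t : (ℤ × ℤ) × (ℤ × ℤ) × (ℤ × ℤ)) : (ℤ × ℤ) × (ℤ × ℤ) × (ℤ × ℤ) :=
  ((Rm t.1 t.2.1).1, (Rm t.1 t.2.1).2, t.2.2)

/-- `1 ⊗ R` acting on the last two factors of a triple. -/
def R23 (t : (ℤ × ℤ) × (ℤ × ℤ) × (ℤ × ℤ)) : (ℤ × ℤ) × (ℤ × ℤ) × (ℤ × ℤ) :=
  (t.1, (Rm t.2.1 t.2.2).1, (Rm t.2.1 t.2.2).2)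

/-!
The piecewise-linear `Rm` is the tropicalization of the geometric `R`-matrix
`x̃ᵢ = xᵢ (x_{i+1} + yᵢ) / (xᵢ + y_{i-1})`, `ỹᵢ = yᵢ (xᵢ + y_{i-1}) / (x_{i+1} + yᵢ)`:
under `a ↦ trop a`, `+`, `min` and `-` on `ℤ` become `*`, `+` and `/` in the semifield
`Tropical (WithTop ℤ)`. The Yang–Baxter relation of the geometric `R` is a rational identity
whose denominators are subtraction-free, so it holds in every semifield without zero sums of
nonzero elements, the tropical one in particular, and `ℤ` embeds into that semifield.
-/

namespace Tropical

variable {R : Type*} [LinearOrderedAddCommGroupWithTop R]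

instance instSemifield : Semifield (Tropical R) where
  __ := (inferInstance : CommSemiring (Tropical R))
  exists_pair_ne := ⟨0, 1, trop_injective.ne LinearOrderedAddCommGroupWithTop.top_ne_zero⟩
  div_eq_mul_inv _ _ := untrop_injective (sub_eq_add_neg _ _)
  zpow n x := trop (n • untrop x)
  zpow_zero' _ := untrop_injective (zero_zsmul _)
  zpow_succ' _ _ := untrop_injective (SubNegMonoid.zsmul_succ' _ _)
  zpow_neg' _ _ := untrop_injective (SubNegMonoid.zsmul_neg' _ _)
  inv_zero := untrop_injective LinearOrderedAddCommGroupWithTop.neg_top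
  mul_inv_cancel _ ha :=
    untrop_injective <|
      LinearOrderedAddCommGroupWithTop.add_neg_cancel_of_ne_top (untrop_injective.ne ha)
  nnqsmul := _
  nnqsmul_def _ _ := rfl

theorem trop_coe_add {G : Type*} [Add G] (a b : G) :
    trop ((a + b : G) : WithTop G) = trop (a : WithTop G) * trop (b : WithTop G) := rfl

theorem trop_coe_sub {G : Type*} [AddCommGroup G] (a b : G) :
    trop ((a - b : G) : WithTop G) = trop (a : WithTop G) / trop (b : WithTop G) := rfl

theorem trop_coe_min {G : Type*} [LinearOrder G] (a b : G) :
    trop ((min a b : G) : WithTop G) = trop (a : WithTop G) + trop (b : WithTop G) := rfl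

end Tropical

section GeometricR

variable {K : Type*} [Semifield K]

def geomR (x y : K × K) : (K × K) × (K × K) :=
  ((y.1 * (x.1 + y.2) / (x.2 + y.1), y.2 * (x.2 + y.1) / (x.1 + y.2)),
   (x.1 * (x.2 + y.1) / (x.1 + y.2), x.2 * (x.1 + y.2) / (x.2 + y.1)))

def geomR12 (t : (K × K) × (K × K) × (K × K)) : (K × K) × (K × K) × (K × K) :=
  ((geomR t.1 t.2.1).1, (geomR t.1 t.2.1).2, t.2.2)

def geomR23 (t : (K × K) × (K × K) × (K × K)) : (K × K) × (K × K) × (K × K) :=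
  (t.1, (geomR t.2.1 t.2.2).1, (geomR t.2.1 t.2.2).2)

theorem geomR_yang_baxter (hK : ∀ a b : K, a + b = 0 ↔ a = 0 ∧ b = 0)
    {x y z : K × K} (hx₁ : x.1 ≠ 0) (hx₂ : x.2 ≠ 0) (hy₁ : y.1 ≠ 0) (hy₂ : y.2 ≠ 0)
    (hz₁ : z.1 ≠ 0) (hz₂ : z.2 ≠ 0) :
    geomR12 (geomR23 (geomR12 (x, y, z))) = geomR23 (geomR12 (geomR23 (x, y, z))) := by
  simp only [geomR12, geomR23, geomR, Prod.mk.injEq]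
  refine ⟨⟨?_, ?_⟩, ⟨?_, ?_⟩, ?_, ?_⟩ <;>
  · field_simp (disch := simp [*])
    ring

end GeometricR

section Tropicalization

open Tropical

def tropPair (x : ℤ × ℤ) : Tropical (WithTop ℤ) × Tropical (WithTop ℤ) :=
  (trop (x.1 : WithTop ℤ), trop (x.2 : WithTop ℤ))

theorem tropPair_injective : Function.Injective tropPair := by
  rintro ⟨a, b⟩ ⟨c, d⟩ h
  simpa [tropPair] using h

theorem geomR_tropPair (x y : ℤ × ℤ) :
    geomR (tropPair x) (tropPair y) = (tropPair (Rm x y).1, tropPair (Rm x y).2) := by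
  simp only [geomR, tropPair, Rm, trop_coe_add, trop_coe_sub, trop_coe_min]

def tropTriple : (ℤ × ℤ) × (ℤ × ℤ) × (ℤ × ℤ) →
    (Tropical (WithTop ℤ) × Tropical (WithTop ℤ)) × (Tropical (WithTop ℤ) × Tropical (WithTop ℤ)) ×
      (Tropical (WithTop ℤ) × Tropical (WithTop ℤ)) :=
  Prod.map tropPair (Prod.map tropPair tropPair)

theorem tropTriple_injective : Function.Injective tropTriple :=
  tropPair_injective.prodMap (tropPair_injective.prodMap tropPair_injective)

theorem tropTriple_R12 (t : (ℤ × ℤ) × (ℤ × ℤ) × (ℤ × ℤ)) :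
    tropTriple (R12 t) = geomR12 (tropTriple t) := by
  simp only [tropTriple, R12, geomR12, Prod.map, geomR_tropPair]

theorem tropTriple_R23 (t : (ℤ × ℤ) × (ℤ × ℤ) × (ℤ × ℤ)) :
    tropTriple (R23 t) = geomR23 (tropTriple t) := by
  simp only [tropTriple, R23, geomR23, Prod.map, geomR_tropPair]

end Tropicalization

theorem yang_baxter_general
    (x y z : ℤ × ℤ) :
    R12 (R23 (R12 (x, y, z))) = R23 (R12 (R23 (x, y, z))) := by
  apply tropTriple_injective
  simp only [tropTriple_R12, tropTriple_R23]
  apply geomR_yang_baxter fun _ _ => Tropical.add_eq_zero_iff <;>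
    exact Tropical.trop_coe_ne_zero _

/-- the Yang–Baxter relation
`(R ⊗ 1)(1 ⊗ R)(R ⊗ 1) = (1 ⊗ R)(R ⊗ 1)(1 ⊗ R)` holds on `B_k ⊗ B_l ⊗ B_m`. -/
theorem yang_baxter
    (x y z : ℤ × ℤ)
    (hx1 : 0 ≤ x.1) (hx2 : 0 ≤ x.2) (hy1 : 0 ≤ y.1) (hy2 : 0 ≤ y.2)
    (hz1 : 0 ≤ z.1) (hz2 : 0 ≤ z.2) :
    R12 (R23 (R12 (x, y, z))) = R23 (R12 (R23 (x, y, z))) :=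
  yang_baxter_general x y z
end

section
/- Let b = b_1 ⊗ ⋯ ⊗ b_L ∈ B_1^{⊗L} and suppose the path T_l(b) (the image of b under the carrier u_l, defined by u_l ⊗ b ≅ T_l(b) ⊗ u_l' via successive applications of combinatorial R) is computed for l ≥ L. Then T_l(b) = T_{l'}(b) for all l, l' ≥ L, i.e., the time evolutions T_l stabilize for large l. -/
section CombinatorialR

variable {x x' y : ℤ × ℤ}

lemma RQ0_of_snd_le (h : y.2 ≤ x.1) : RQ0 x y = y.2 :=
  min_eq_right h

lemma Rcar_fst_add_snd (x y : ℤ × ℤ) : (Rcar x y).1 + (Rcar x y).2 = x.1 + x.2 := by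
  simp only [Rcar]; ring

lemma snd_Rcar_nonneg (hx₁ : 0 ≤ x.1) (hy₂ : 0 ≤ y.2) : 0 ≤ (Rcar x y).2 := by
  simp only [Rcar, RQ0, RQ1]
  have : min x.2 y.1 ≤ x.2 := min_le_left _ _
  have : 0 ≤ min x.1 y.2 := le_min hx₁ hy₂
  omega

lemma snd_Rcar_le (hx₂ : 0 ≤ x.2) (hy₁ : 0 ≤ y.1) : (Rcar x y).2 ≤ x.2 + y.2 := by
  simp only [Rcar, RQ0, RQ1]
  have : min x.1 y.2 ≤ y.2 := min_le_right _ _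
  have : 0 ≤ min x.2 y.1 := le_min hx₂ hy₁
  omega

lemma snd_Rcar_congr (hx : y.2 ≤ x.1) (hx' : y.2 ≤ x'.1) (h : x.2 = x'.2) :
    (Rcar x y).2 = (Rcar x' y).2 := by
  simp only [Rcar, RQ0_of_snd_le hx, RQ0_of_snd_le hx', RQ1, h]

lemma Rout_congr (hx : y.2 ≤ x.1) (hx' : y.2 ≤ x'.1) (h : x.2 = x'.2) :
    Rout x y = Rout x' y := by
  simp only [Rout, RQ0_of_snd_le hx, RQ0_of_snd_le hx', RQ1, h]

end CombinatorialR

section Carrier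

variable {b : ℕ → ℤ × ℤ} {l l' j : ℕ}

lemma carrier_fst_add_snd (b : ℕ → ℤ × ℤ) (l j : ℕ) :
    (carrier b l j).1 + (carrier b l j).2 = l := by
  induction j with
  | zero => simp [carrier]
  | succ j ih => rw [carrier, Rcar_fst_add_snd, ih]

lemma carrier_snd_mem_Icc (hb : ∀ i < j, b i = (1, 0) ∨ b i = (0, 1)) (hj : j ≤ l) :
    (carrier b l j).2 ∈ Set.Icc 0 (j : ℤ) := by
  induction j with
  | zero => simp [carrier]
  | succ j ih =>
    obtain ⟨hx₂, hxj⟩ := ih (fun i hi => hb i (by omega)) (by omega)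
    have hsum := carrier_fst_add_snd b l j
    have hy : 0 ≤ (b j).1 ∧ 0 ≤ (b j).2 ∧ (b j).2 ≤ 1 := by
      rcases hb j (by omega) with h | h <;> simp [h]
    have hle := snd_Rcar_le (y := b j) hx₂ hy.1
    refine ⟨snd_Rcar_nonneg (by omega) hy.2.1, ?_⟩
    rw [carrier]
    push_cast
    omega

lemma one_le_fst_carrier (hb : ∀ i < j, b i = (1, 0) ∨ b i = (0, 1)) (hj : j < l) :
    1 ≤ (carrier b l j).1 := by
  have := carrier_fst_add_snd b l j
  have := (carrier_snd_mem_Icc hb hj.le).2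
  omega

lemma snd_le_fst_carrier (hb : ∀ i ≤ j, b i = (1, 0) ∨ b i = (0, 1)) (hj : j < l) :
    (b j).2 ≤ (carrier b l j).1 := by
  have := one_le_fst_carrier (fun i hi => hb i hi.le) hj
  rcases hb j le_rfl with h | h <;> simp only [h] <;> omega

lemma carrier_snd_eq (hb : ∀ i < j, b i = (1, 0) ∨ b i = (0, 1)) (hl : j ≤ l) (hl' : j ≤ l') :
    (carrier b l j).2 = (carrier b l' j).2 := by
  induction j with
  | zero => rfl
  | succ j ih =>
    have hb' : ∀ i ≤ j, b i = (1, 0) ∨ b i = (0, 1) := fun i hi => hb i (by omega)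
    exact snd_Rcar_congr (snd_le_fst_carrier hb' (by omega)) (snd_le_fst_carrier hb' (by omega))
      (ih (fun i hi => hb i (by omega)) (by omega) (by omega))

end Carrier

/-- for a path `b ∈ B₁^{⊗L}` (each factor is `(1,0)` = letter 1
or `(0,1)` = letter 2), the time evolutions `T_l` stabilize for large `l`:
`T_l(b) = T_{l'}(b)` whenever `l, l' ≥ L`. -/
theorem time_evolution_stabilizes
    (L : ℕ) (b : ℕ → ℤ × ℤ)
    (hb : ∀ j < L, b j = ((1 : ℤ), (0 : ℤ)) ∨ b j = ((0 : ℤ), (1 : ℤ))) :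
    ∀ l l' : ℕ, L ≤ l → L ≤ l' → ∀ j < L, Tout b l j = Tout b l' j := by
  intro l l' hl hl' j hj
  have hb' : ∀ i ≤ j, b i = (1, 0) ∨ b i = (0, 1) := fun i hi => hb i (by omega)
  exact Rout_congr (snd_le_fst_carrier hb' (by omega)) (snd_le_fst_carrier hb' (by omega))
    (carrier_snd_eq (fun i hi => hb' i hi.le) (by omega) (by omega))
end

section
/- For a single-soliton path in B_1^{⊗L}, namely b with b_j = 2 for a ≤ j < a+m and b_j = 1 otherwise (with a+m−1+l ≤ L), applying the time evolution T_l with l ≥ m translates the soliton by m: T_l(b) has b'_j = 2 exactly for a+m ≤ j < a+2m and 1 otherwise. Moreover E_l(b) = min(l, m). -/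
/-!
While the carrier `u_l^{(j)} = (l - k, k)` of capacity `l` holds `k` letters `2`, the
combinatorial `R` lets it swallow every `2` it meets (as long as `k < l`), emitting a `1`,
and lets it drop one `2` at every `1` it meets (as long as `k > 0`). Along the soliton
the load therefore climbs from `0` to `m ≤ l` on `[a, a + m)`, and then falls back to `0`
on `[a + m, a + 2m)`, where the `m` letters `2` are re-emitted. The energy `H` counts
the swallowed letters, so `E_l = m = min(l, m)`.
-/

/-- Letters of `B_1` are encoded as `(1, 0) ≅ 1` and `(0, 1) ≅ 2`. -/
def soliton (a m : ℕ) (j : ℕ) : ℤ × ℤ :=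
  if a ≤ j ∧ j < a + m then ((0 : ℤ), (1 : ℤ)) else ((1 : ℤ), (0 : ℤ))

/-- The number of letters `2` carried by `u_l^{(j)}` along `soliton a m`. -/
def solitonLoad (a m j : ℕ) : ℤ :=
  max 0 (min ((j : ℤ) - a) (min (m : ℤ) ((a : ℤ) + 2 * m - j)))

section CombinatorialR

variable {l k : ℤ}

theorem Rcar_two (hk : 0 ≤ k) (hkl : k < l) : Rcar (l - k, k) (0, 1) = (l - (k + 1), k + 1) := by
  simp only [Rcar, RQ0, RQ1, Prod.mk.injEq]
  omega

theorem Rout_two (hk : 0 ≤ k) (hkl : k < l) : Rout (l - k, k) (0, 1) = (1, 0) := by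
  simp only [Rout, RQ0, RQ1, Prod.mk.injEq]
  omega

theorem Hfun_two (hkl : k < l) : Hfun (l - k, k) (0, 1) = 1 := by
  simp only [Hfun, RQ0]
  omega

theorem Rcar_one (hk : 0 ≤ k) (hkl : k ≤ l) :
    Rcar (l - k, k) (1, 0) = (l - max 0 (k - 1), max 0 (k - 1)) := by
  simp only [Rcar, RQ0, RQ1, Prod.mk.injEq]
  omega

theorem Rout_one (hk : 0 ≤ k) (hkl : k ≤ l) :
    Rout (l - k, k) (1, 0) = if 0 < k then (0, 1) else (1, 0) := by
  split_ifs <;> simp only [Rout, RQ0, RQ1, Prod.mk.injEq] <;> omega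

theorem Hfun_one (hkl : k ≤ l) : Hfun (l - k, k) (1, 0) = 0 := by
  simp only [Hfun, RQ0]
  omega

end CombinatorialR

section Soliton

variable {a m l j : ℕ}

theorem solitonLoad_nonneg : 0 ≤ solitonLoad a m j := le_max_left _ _

theorem solitonLoad_le (hl : m ≤ l) : solitonLoad a m j ≤ l := by
  unfold solitonLoad
  omega

theorem solitonLoad_lt_of_mem (hl : m ≤ l) (h : a ≤ j ∧ j < a + m) : solitonLoad a m j < l := by
  unfold solitonLoad
  omega

theorem solitonLoad_succ_of_mem (h : a ≤ j ∧ j < a + m) :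
    solitonLoad a m (j + 1) = solitonLoad a m j + 1 := by
  unfold solitonLoad
  push_cast
  omega

theorem solitonLoad_succ_of_not_mem (h : ¬(a ≤ j ∧ j < a + m)) :
    solitonLoad a m (j + 1) = max 0 (solitonLoad a m j - 1) := by
  unfold solitonLoad
  push_cast
  omega

theorem solitonLoad_pos_iff_of_not_mem (h : ¬(a ≤ j ∧ j < a + m)) :
    0 < solitonLoad a m j ↔ a + m ≤ j ∧ j < a + m + m := by
  unfold solitonLoad
  omega

theorem carrier_soliton (hl : m ≤ l) (j : ℕ) :
    carrier (soliton a m) l j = (l - solitonLoad a m j, solitonLoad a m j) := by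
  induction j with
  | zero =>
    simp only [carrier, solitonLoad, Prod.mk.injEq]
    omega
  | succ j ih =>
    rw [carrier, ih, soliton]
    split_ifs with h
    · rw [Rcar_two solitonLoad_nonneg (solitonLoad_lt_of_mem hl h), solitonLoad_succ_of_mem h]
    · rw [Rcar_one solitonLoad_nonneg (solitonLoad_le hl), solitonLoad_succ_of_not_mem h]

theorem Tout_soliton (hl : m ≤ l) (j : ℕ) :
    Tout (soliton a m) l j = soliton (a + m) m j := by
  rw [Tout, carrier_soliton hl, soliton, soliton]
  by_cases h : a ≤ j ∧ j < a + m
  · rw [if_pos h, Rout_two solitonLoad_nonneg (solitonLoad_lt_of_mem hl h), if_neg (by omega)]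
  · rw [if_neg h, Rout_one solitonLoad_nonneg (solitonLoad_le hl)]
    exact if_congr (solitonLoad_pos_iff_of_not_mem h) rfl rfl

theorem Eloc_soliton (hl : m ≤ l) (j : ℕ) :
    Eloc (soliton a m) l j = if j ∈ Finset.Ico a (a + m) then 1 else 0 := by
  rw [Eloc, carrier_soliton hl, soliton]
  by_cases h : a ≤ j ∧ j < a + m
  · rw [if_pos h, if_pos (Finset.mem_Ico.mpr h), Hfun_two (solitonLoad_lt_of_mem hl h)]
  · rw [if_neg h, if_neg (mt Finset.mem_Ico.mp h), Hfun_one (solitonLoad_le hl)]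

theorem Esum_soliton {L : ℕ} (hl : m ≤ l) (hL : a + m ≤ L) : Esum (soliton a m) L l = m := by
  have hIco : (Finset.range L).filter (· ∈ Finset.Ico a (a + m)) = Finset.Ico a (a + m) := by
    ext j
    simp only [Finset.mem_filter, Finset.mem_range, Finset.mem_Ico]
    omega
  simp only [Esum, Eloc_soliton hl, Finset.sum_boole, hIco, Nat.card_Ico, Nat.add_sub_cancel_left]

end Soliton

theorem single_soliton_translation_general
    (L a m l : ℕ) (b : ℕ → ℤ × ℤ)
    (hl : m ≤ l) (hroom : a + m + l ≤ L)
    (hb : ∀ j : ℕ, b j = if a ≤ j ∧ j < a + m then ((0 : ℤ), (1 : ℤ))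
      else ((1 : ℤ), (0 : ℤ))) :
    (∀ j < L, Tout b l j =
      if a + m ≤ j ∧ j < a + 2 * m then ((0 : ℤ), (1 : ℤ)) else ((1 : ℤ), (0 : ℤ))) ∧
    Esum b L l = min (l : ℤ) (m : ℤ) := by
  obtain rfl : b = soliton a m := funext hb
  refine ⟨fun j _ => ?_, ?_⟩
  · rw [Tout_soliton hl, soliton, two_mul, add_assoc]
  · rw [Esum_soliton hl (by omega), min_eq_right (by exact_mod_cast hl)]

/-- a single soliton of length `m` (letters 2 at positions
`a ≤ j < a + m`, 0-indexed, letters 1 elsewhere, with enough room on the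
right: `a + m + l ≤ L`) is translated by `m` under the time evolution `T_l`
with `l ≥ m`; moreover the conserved quantity is `E_l(b) = min(l, m)`. -/
theorem single_soliton_translation
    (L a m l : ℕ) (b : ℕ → ℤ × ℤ)
    (hm : 0 < m) (hl : m ≤ l) (hroom : a + m + l ≤ L)
    (hb : ∀ j : ℕ, b j = if a ≤ j ∧ j < a + m then ((0 : ℤ), (1 : ℤ))
      else ((1 : ℤ), (0 : ℤ))) :
    (∀ j < L, Tout b l j =
      if a + m ≤ j ∧ j < a + 2 * m then ((0 : ℤ), (1 : ℤ)) else ((1 : ℤ), (0 : ℤ))) ∧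
    Esum b L l = min (l : ℤ) (m : ℤ) :=
  single_soliton_translation_general L a m l b hl hroom hb
end

section
/- Let b ∈ B_1^{⊗L} contain solitons of lengths μ_1, ..., μ_N that are well-separated (soliton i occupies positions [a_i, a_i+μ_i) with a_{i+1} ≥ a_i + 2μ_i + μ_{i+1} say, and μ_1 ≥ μ_2 ≥ ⋯ ≥ μ_N ordered left to right decreasingly). Then for every l ≥ 1, the conserved quantity satisfies E_l(b) = Σ_{i=1}^N min(μ_i, l). -/
/-! Along a path in `B₁`, the carrier `u_l^{(j)}` always has the form `(l - d, d)`: its load `d`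
grows by one (up to `l`) at each letter `2` and drops by one (down to `0`) at each letter `1`,
and the energy collected is `1` exactly when a `2` meets a carrier that is not yet full.
Hence a soliton of length `m` contributes `min m l`, and the `m` letters `1` that follow it
empty the carrier again, so separated solitons contribute independently. -/

open Finset

section Step

variable {l d : ℤ}

theorem Rcar_vacuum (hd : 0 ≤ d) (hdl : d ≤ l) :
    Rcar (l - d, d) (1, 0) = (l - max (d - 1) 0, max (d - 1) 0) := by
  simp only [Rcar, RQ0, RQ1]
  ext <;> dsimp only <;> omega

theorem Hfun_vacuum (hdl : d ≤ l) : Hfun (l - d, d) (1, 0) = 0 := by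
  simp only [Hfun, RQ0]
  omega

theorem Rcar_particle (hd : 0 ≤ d) (hdl : d ≤ l) :
    Rcar (l - d, d) (0, 1) = (l - min (d + 1) l, min (d + 1) l) := by
  simp only [Rcar, RQ0, RQ1]
  ext <;> dsimp only <;> omega

theorem Hfun_particle : Hfun (l - d, d) (0, 1) = min (l - d) 1 := rfl

end Step

section Run

variable {b : ℕ → ℤ × ℤ} {l s : ℕ}

theorem carrier_add_of_vacuum {d : ℤ} (hd : 0 ≤ d) (hdl : d ≤ l)
    (hc : carrier b l s = (l - d, d)) {n : ℕ} (hv : ∀ j ∈ Ico s (s + n), b j = (1, 0)) :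
    carrier b l (s + n) = (l - max (d - n) 0, max (d - n) 0) := by
  induction n with
  | zero => simpa [max_eq_left hd] using hc
  | succ n ih =>
    have hcn := ih fun j hj => hv j (Ico_subset_Ico_right (by omega) hj)
    change Rcar (carrier b l (s + n)) (b (s + n)) = _
    rw [hcn, hv (s + n) (by simp), Rcar_vacuum (by positivity) (by omega)]
    ext <;> dsimp only <;> omega

theorem sum_Eloc_of_vacuum {d : ℤ} (hd : 0 ≤ d) (hdl : d ≤ l)
    (hc : carrier b l s = (l - d, d)) {n : ℕ} (hv : ∀ j ∈ Ico s (s + n), b j = (1, 0)) :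
    ∑ j ∈ Ico s (s + n), Eloc b l j = 0 := by
  refine sum_eq_zero fun j hj => ?_
  obtain ⟨k, rfl⟩ := Nat.exists_eq_add_of_le (mem_Ico.1 hj).1
  have hk : k < n := by simpa using hj
  rw [Eloc, carrier_add_of_vacuum hd hdl hc fun j hj => hv j (Ico_subset_Ico_right (by omega) hj),
    hv _ hj, Hfun_vacuum (by omega)]

theorem carrier_add_of_particles (hc : carrier b l s = ((l : ℤ), 0)) {m : ℕ}
    (hp : ∀ j ∈ Ico s (s + m), b j = (0, 1)) :
    carrier b l (s + m) = (l - min (m : ℤ) l, min (m : ℤ) l) := by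
  induction m with
  | zero => simpa using hc
  | succ m ih =>
    have hcm := ih fun j hj => hp j (Ico_subset_Ico_right (by omega) hj)
    change Rcar (carrier b l (s + m)) (b (s + m)) = _
    rw [hcm, hp (s + m) (by simp), Rcar_particle (by positivity) (by omega)]
    ext <;> dsimp only <;> omega

theorem sum_Eloc_of_particles (hc : carrier b l s = ((l : ℤ), 0)) {m : ℕ}
    (hp : ∀ j ∈ Ico s (s + m), b j = (0, 1)) :
    ∑ j ∈ Ico s (s + m), Eloc b l j = min (m : ℤ) l := by
  induction m with
  | zero => simp
  | succ m ih =>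
    have hp' : ∀ j ∈ Ico s (s + m), b j = (0, 1) :=
      fun j hj => hp j (Ico_subset_Ico_right (by omega) hj)
    rw [← add_assoc, sum_Ico_succ_top (by omega), ih hp', Eloc, carrier_add_of_particles hc hp',
      hp (s + m) (by simp), Hfun_particle]
    omega

variable {m n : ℕ} (hc : carrier b l s = ((l : ℤ), 0))
  (hp : ∀ j ∈ Ico s (s + m), b j = (0, 1))
  (hv : ∀ j ∈ Ico (s + m) (s + m + n), b j = (1, 0))
include hc hp hv

theorem sum_range_Eloc_of_soliton :
    ∑ j ∈ range (s + m + n), Eloc b l j = ∑ j ∈ range s, Eloc b l j + min (m : ℤ) l := by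
  rw [← sum_range_add_sum_Ico _ (by omega : s ≤ s + m + n),
    ← sum_Ico_consecutive _ (Nat.le_add_right s m) (Nat.le_add_right _ n),
    sum_Eloc_of_particles hc hp,
    sum_Eloc_of_vacuum (by positivity) (by omega) (carrier_add_of_particles hc hp) hv, add_zero]

theorem carrier_of_soliton (hmn : m ≤ n) : carrier b l (s + m + n) = ((l : ℤ), 0) := by
  rw [carrier_add_of_vacuum (by positivity) (by omega) (carrier_add_of_particles hc hp) hv]
  ext <;> dsimp only <;> omega

end Run

section Layout

variable {N : ℕ} {a μ : ℕ → ℕ} {b : ℕ → ℤ × ℤ}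

theorem add_two_mul_le_of_separated
    (hsep : ∀ i, i + 1 < N → a i + 2 * μ i + μ (i + 1) ≤ a (i + 1))
    {i k : ℕ} (hik : i < k) (hk : k < N) : a i + 2 * μ i ≤ a k := by
  induction k with
  | zero => omega
  | succ k ih =>
    have := hsep k hk
    rcases Nat.lt_succ_iff_lt_or_eq.1 hik with hik | rfl
    · have := ih hik (by omega); omega
    · omega

theorem eq_particle_of_mem_soliton
    (hb : ∀ j : ℕ, b j = if ∃ i < N, a i ≤ j ∧ j < a i + μ i
      then ((0 : ℤ), (1 : ℤ)) else ((1 : ℤ), (0 : ℤ)))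
    {i : ℕ} (hi : i < N) : ∀ j ∈ Ico (a i) (a i + μ i), b j = (0, 1) :=
  fun j hj => by rw [hb, if_pos ⟨i, hi, mem_Ico.1 hj⟩]

theorem eq_vacuum_of_mem_gap
    (hb : ∀ j : ℕ, b j = if ∃ i < N, a i ≤ j ∧ j < a i + μ i
      then ((0 : ℤ), (1 : ℤ)) else ((1 : ℤ), (0 : ℤ)))
    {p q : ℕ} (hgap : ∀ k < N, a k + μ k ≤ p ∨ q ≤ a k) {j : ℕ} (hj : j ∈ Ico p q) :
    b j = (1, 0) := by
  rw [hb, if_neg]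
  rintro ⟨k, hk, h1, h2⟩
  rw [mem_Ico] at hj
  rcases hgap k hk with h | h <;> omega

theorem carrier_and_sum_Eloc_of_separated
    (hsep : ∀ i, i + 1 < N → a i + 2 * μ i + μ (i + 1) ≤ a (i + 1))
    (hb : ∀ j : ℕ, b j = if ∃ i < N, a i ≤ j ∧ j < a i + μ i
      then ((0 : ℤ), (1 : ℤ)) else ((1 : ℤ), (0 : ℤ)))
    (l : ℕ) {i : ℕ} (hi : i < N) :
    carrier b l (a i) = ((l : ℤ), 0) ∧
      ∑ j ∈ range (a i), Eloc b l j = ∑ k ∈ range i, min (μ k : ℤ) l := by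
  induction i with
  | zero =>
    have hgap : ∀ k < N, a k + μ k ≤ 0 ∨ a 0 ≤ a k := fun k hk => by
      rcases k.eq_zero_or_pos with rfl | hk0
      · omega
      · have := add_two_mul_le_of_separated hsep hk0 hk; omega
    have hv : ∀ j ∈ Ico (0 + 0) (0 + 0 + a 0), b j = (1, 0) := by
      simpa using fun j => eq_vacuum_of_mem_gap hb hgap (j := j)
    have hsum := sum_range_Eloc_of_soliton (l := l) rfl (by simp) hv
    have hcar := carrier_of_soliton (l := l) rfl (by simp) hv (Nat.zero_le _)
    simp only [zero_add, sum_range_zero, Nat.cast_zero, Int.natCast_nonneg, min_eq_left]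
      at hsum hcar
    exact ⟨hcar, by simpa using hsum⟩
  | succ i ih =>
    obtain ⟨hc, hs⟩ := ih (by omega)
    obtain ⟨n, hn⟩ := Nat.exists_eq_add_of_le (hsep i hi)
    have hgap : ∀ k < N,
        a k + μ k ≤ a i + μ i ∨ a i + μ i + (μ i + n + μ (i + 1)) ≤ a k := fun k hk => by
      rcases lt_trichotomy k i with hki | rfl | hki
      · have := add_two_mul_le_of_separated hsep hki (by omega); omega
      · omega
      · rcases (show i + 1 = k ∨ i + 1 < k by omega) with rfl | hk1
        · omega
        · have := add_two_mul_le_of_separated hsep hk1 hk; omega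
    have hv := fun j (hj : j ∈ Ico _ _) => eq_vacuum_of_mem_gap hb hgap hj
    have hp := eq_particle_of_mem_soliton hb (show i < N by omega)
    rw [show a (i + 1) = a i + μ i + (μ i + n + μ (i + 1)) by omega]
    refine ⟨carrier_of_soliton hc hp hv (by omega), ?_⟩
    rw [sum_range_Eloc_of_soliton hc hp hv, hs, sum_range_succ]

end Layout

theorem conserved_quantity_of_separated_solitons_general
    (L N : ℕ) (a μ : ℕ → ℕ) (b : ℕ → ℤ × ℤ)
    (hsep : ∀ i, i + 1 < N → a i + 2 * μ i + μ (i + 1) ≤ a (i + 1))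
    (hin : ∀ i < N, a i + μ i ≤ L)
    (hb : ∀ j : ℕ, b j = if ∃ i < N, a i ≤ j ∧ j < a i + μ i
      then ((0 : ℤ), (1 : ℤ)) else ((1 : ℤ), (0 : ℤ))) :
    ∀ l : ℕ, 1 ≤ l →
      Esum b L l = ∑ i ∈ Finset.range N, min (μ i : ℤ) (l : ℤ) := by
  intro l _
  rcases N with _ | M
  · have hgap : ∀ k < 0, a k + μ k ≤ 0 ∨ L ≤ a k := by simp
    have hv : ∀ j ∈ Ico (0 + 0) (0 + 0 + L), b j = (1, 0) := by
      simpa using fun j => eq_vacuum_of_mem_gap hb hgap (j := j)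
    simpa [Esum] using sum_range_Eloc_of_soliton (l := l) rfl (by simp) hv
  obtain ⟨hc, hs⟩ := carrier_and_sum_Eloc_of_separated hsep hb l (show M < M + 1 by omega)
  obtain ⟨n, hn⟩ := Nat.exists_eq_add_of_le (hin M (by omega))
  have hgap : ∀ k < M + 1, a k + μ k ≤ a M + μ M ∨ a M + μ M + n ≤ a k := fun k hk => by
    rcases (show k = M ∨ k < M by omega) with rfl | hkM
    · omega
    · have := add_two_mul_le_of_separated hsep hkM (by omega); omega
  have hv := fun j (hj : j ∈ Ico _ _) => eq_vacuum_of_mem_gap hb hgap hj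
  rw [Esum, hn, sum_range_Eloc_of_soliton hc (eq_particle_of_mem_soliton hb (by omega)) hv, hs,
    sum_range_succ]

/-- for a path `b ∈ B₁^{⊗L}` containing well-separated solitons of
lengths `μ₀ ≥ μ₁ ≥ ⋯ ≥ μ_{N-1}` (soliton `i` occupies positions
`[aᵢ, aᵢ + μᵢ)`, with the separation `a_{i+1} ≥ aᵢ + 2μᵢ + μ_{i+1}`, solitons
ordered left to right with weakly decreasing lengths, all within `[0, L)`),
the conserved quantities are `E_l(b) = ∑ᵢ min(μᵢ, l)` for every `l ≥ 1`. -/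
theorem conserved_quantity_of_separated_solitons
    (L N : ℕ) (a μ : ℕ → ℕ) (b : ℕ → ℤ × ℤ)
    (hμpos : ∀ i < N, 0 < μ i)
    (hdec : ∀ i, i + 1 < N → μ (i + 1) ≤ μ i)
    (hsep : ∀ i, i + 1 < N → a i + 2 * μ i + μ (i + 1) ≤ a (i + 1))
    (hin : ∀ i < N, a i + μ i ≤ L)
    (hb : ∀ j : ℕ, b j = if ∃ i < N, a i ≤ j ∧ j < a i + μ i
      then ((0 : ℤ), (1 : ℤ)) else ((1 : ℤ), (0 : ℤ))) :
    ∀ l : ℕ, 1 ≤ l →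
      Esum b L l = ∑ i ∈ Finset.range N, min (μ i : ℤ) (l : ℤ) :=
  conserved_quantity_of_separated_solitons_general L N a μ b hsep hin hb
end
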